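/- Let Π be a non-disjunctive (single-head) CNF theory. Every minimal non-outbound set in atom(Π) for Π is super-elementary for Π, i.e., it is elementary for Π and non-outbound in atom(Π) for Π. -/

import Mathlib

structure Clause where
  head : Finset ℕ
  body : Finset ℕ
deriving DecidableEq

abbrev Theory := Finset Clause

/-- interpretation I satisfies clause c -/
def satC (I : Finset ℕ) (c : Clause) : Prop :=
  (c.head ∩ I).Nonempty ∨ ¬ c.body ⊆ I

def isModel (T : Theory) (I : Finset ℕ) : Prop := ∀ c ∈ T, satC I c

def isMinModel (T : Theory) (I : Finset ℕ) : Prop :=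
  isModel T I ∧ ∀ J ⊂ I, ¬ isModel T J

def Positive (T : Theory) : Prop := ∀ c ∈ T, c.head.Nonempty

def Horn (T : Theory) : Prop := ∀ c ∈ T, c.head.card = 1

/-- atoms occurring in a theory -/
def atoms (T : Theory) : Finset ℕ := T.biUnion (fun c => c.head ∪ c.body)

/-- c_{X←} : project head on X -/
def projHeadC (c : Clause) (X : Finset ℕ) : Clause := ⟨c.head ∩ X, c.body⟩
/-- c_X : project head and body on X -/
def projC (c : Clause) (X : Finset ℕ) : Clause := ⟨c.head ∩ X, c.body ∩ X⟩

/-- Π_{X←} -/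
def projHeadT (T : Theory) (X : Finset ℕ) : Theory :=
  (T.image (fun c => projHeadC c X)).filter (fun c => c.head.Nonempty)

/-- Π_X -/
def projT (T : Theory) (X : Finset ℕ) : Theory :=
  (T.image (fun c => projC c X)).filter (fun c => c.head.Nonempty)

/-- Π^{nd} : single-head fragment -/
def nd (T : Theory) : Theory := T.filter (fun c => c.head.card = 1)

/-- the steady set of M for Π is the minimal model of Π^{nd}_{M←} -/
def isSteady (T : Theory) (M S : Finset ℕ) : Prop :=
  isMinModel (nd (projHeadT T M)) S

def simpl (T : Theory) (M S : Finset ℕ) : Theory :=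
  T.filter (fun c => c.head ∩ S = ∅ ∧ c.body ⊆ M)

/-- simplified theory of Π w.r.t. M (with steady set S) -/
def simplT (T : Theory) (M S : Finset ℕ) : Theory := projT (simpl T M S) (M \ S)

/-- E erasable in M for T -/
def Erasable (T : Theory) (M E : Finset ℕ) : Prop :=
  E.Nonempty ∧ E ⊆ M ∧ isModel T (M \ E)

def Outbound (T : Theory) (Y Z : Finset ℕ) : Prop :=
  ∃ c ∈ T, (c.head ∩ Z).Nonempty ∧ (c.body ∩ (Y \ Z)).Nonempty ∧
    c.body ∩ Z = ∅ ∧ c.head ∩ (Y \ Z) = ∅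

def Elementary (T : Theory) (Y : Finset ℕ) : Prop :=
  Y.Nonempty ∧ Y ⊆ atoms T ∧ ∀ Z, Z ⊂ Y → Z.Nonempty → Outbound T Y Z

def HEF (T : Theory) : Prop :=
  ∀ c ∈ T, ∀ E, Elementary T E → (E ∩ c.head).card ≤ 1

def DisjunctiveSet (T : Theory) (S : Finset ℕ) : Prop :=
  ∃ c ∈ T, 1 < (c.head ∩ S).card

def SuperElementary (T : Theory) (X : Finset ℕ) : Prop :=
  Elementary T X ∧ ¬ Outbound T (atoms T) X

def posForm (T : Theory) (phi : ℕ) : Theory :=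
  T.filter (fun c => c.head.Nonempty) ∪
  (T.filter (fun c => c.head = ∅)).image (fun c => ⟨{phi}, c.body⟩) ∪
  (atoms T).image (fun a => ⟨{a}, {phi}⟩)
/-! A clause witnessing that `Z` is outbound in `Y` either still has body atoms in `X \ Z`,
and then witnesses that `Z` is outbound in `X`, or has its whole body outside `X`, and then
witnesses that `X` is outbound in `Y`. Applied to `X = O` and `Y = atoms T`, the second
alternative is excluded because `O` is non-outbound, so every nonempty proper subset of `O`
is outbound in `O`. -/

open Finset in
theorem Outbound.subset_or {T : Theory} {X Y Z : Finset ℕ} (h : Outbound T Y Z)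
    (hZX : Z ⊆ X) (hXY : X ⊆ Y) : Outbound T X Z ∨ Outbound T Y X := by
  obtain ⟨c, hc, hhead, hbody, hbodyZ, hheadY⟩ := h
  have head_inter_eq_empty : ∀ W ⊆ Y \ Z, c.head ∩ W = ∅ := fun W hW =>
    subset_empty.1 (hheadY ▸ inter_subset_inter_left hW)
  by_cases hbodyX : (c.body ∩ (X \ Z)).Nonempty
  · exact .inl ⟨c, hc, hhead, hbodyX, hbodyZ,
      head_inter_eq_empty _ (sdiff_subset_sdiff hXY le_rfl)⟩
  · rw [not_nonempty_iff_eq_empty] at hbodyX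
    refine .inr ⟨c, hc, hhead.mono (inter_subset_inter_left hZX), ?_, ?_,
      head_inter_eq_empty _ (sdiff_subset_sdiff le_rfl hZX)⟩
    · rwa [← sdiff_union_sdiff_cancel hXY hZX, inter_union_distrib_left, hbodyX,
        union_empty] at hbody
    · rw [← union_sdiff_of_subset hZX, inter_union_distrib_left, hbodyZ, hbodyX, union_empty]

theorem stmt11_general (T : Theory) (O : Finset ℕ)
    (hO : O.Nonempty) (hsub : O ⊆ atoms T)
    (hnout : ¬ Outbound T (atoms T) O)
    (hmin : ∀ O' : Finset ℕ, O' ⊂ O → O'.Nonempty → Outbound T (atoms T) O') :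
    SuperElementary T O :=
  ⟨⟨hO, hsub, fun Z hZO hZ => ((hmin Z hZO hZ).subset_or hZO.subset hsub).resolve_right hnout⟩,
    hnout⟩

theorem stmt11 (T : Theory) (hnd : Horn T) (O : Finset ℕ)
    (hO : O.Nonempty) (hsub : O ⊆ atoms T)
    (hnout : ¬ Outbound T (atoms T) O)
    (hmin : ∀ O' : Finset ℕ, O' ⊂ O → O'.Nonempty → Outbound T (atoms T) O') :
    SuperElementary T O :=
  stmt11_general T O hO hsub hnout hmin
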